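/- Let P(y) = Σ_{v∈V} P_v y_v be a linear functional with real coefficients and set ‖P‖₂ = (Σ_{v∈V} P_v²)^{1/2}. For x ∈ [0,1]^V define the linear functional P^x with coefficients P^x_v = P_v (1 − f(x_{N_v}) − g(x_{N_v})). Then for every t ≥ 0, the occupancy process and the deterministic process started at x(0) satisfy E|P(X(t+1)) − P(x(t+1))| ≤ ‖P‖₂ + E|P^{x(t)}(X(t)) − P^{x(t)}(x(t))| + M Σ_{v∈V} |P_v| · E|X_{N_v}(t) − x_{N_v}(t)|. -/

import Mathlib

/-!
Conditionally on `X(t) = X`, the coordinates of `X(t+1)` are independent Bernoulli variables with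
means `p_v = γ(X_v, X_{N_v})`. The conditional variance of `P(X(t+1))` is
`∑ P_v² p_v (1 - p_v) ≤ ‖P‖₂²`, so by Cauchy–Schwarz `P(X(t+1))` lies within `‖P‖₂` of its
conditional mean `∑ P_v p_v` in `L¹`. Expanding `γ` to first order in its first argument,
`∑ P_v (γ(X_v, X_{N_v}) - γ(x_v, x_{N_v}))` is `P^x(X) - P^x(x)` up to an error that the Lipschitz
bounds on `f` and `g` keep below `M ∑ |P_v| |X_{N_v} - x_{N_v}|`. Averaging over `X(t)` gives the
bound.
-/

open MeasureTheory Finset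

noncomputable section

/-- Real value of a Boolean state. -/
def b2r (b : Bool) : ℝ := if b then 1 else 0

/-- Neighborhood average `y_{N_v} = (deg v)⁻¹ ∑_{w ∈ N_v} y_w`. -/
def nbrAvg {V : Type} [Fintype V] (G : SimpleGraph V) [DecidableRel G.Adj]
    (y : V → ℝ) (v : V) : ℝ :=
  (∑ w ∈ G.neighborFinset v, y w) / (G.degree v : ℝ)

/-- `γ(a,b) = a(1 - f(b)) + (1 - a) g(b)`. -/
def gam (f g : ℝ → ℝ) (a b : ℝ) : ℝ := a * (1 - f b) + (1 - a) * g b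

/-- One-step transition measure of the occupancy process: from state `X`, the
coordinates of the next state are independent Bernoulli with success
probability `γ(X_v, X_{N_v})`; this is the corresponding product measure on
`V → Bool`, written out by its mass function. -/
def stepMeasure {V : Type} [Fintype V] [DecidableEq V] (G : SimpleGraph V)
    [DecidableRel G.Adj] (f g : ℝ → ℝ) (X : V → Bool) : Measure (V → Bool) :=
  ∑ y : V → Bool,
    ENNReal.ofReal (∏ v,
        (if y v then gam f g (b2r (X v)) (nbrAvg G (fun w => b2r (X w)) v)
         else 1 - gam f g (b2r (X v)) (nbrAvg G (fun w => b2r (X w)) v)))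
      • Measure.dirac y

/-- Law of the occupancy process at time `t`, started (a.s.) at `x0`. -/
def law {V : Type} [Fintype V] [DecidableEq V] (G : SimpleGraph V)
    [DecidableRel G.Adj] (f g : ℝ → ℝ) (x0 : V → Bool) : ℕ → Measure (V → Bool)
  | 0 => Measure.dirac x0
  | t + 1 => (law G f g x0 t).bind (stepMeasure G f g)

/-- The deterministic process `x(t+1)_v = γ(x(t)_v, x(t)_{N_v})`. -/
def det {V : Type} [Fintype V] (G : SimpleGraph V) [DecidableRel G.Adj]
    (f g : ℝ → ℝ) (x0 : V → ℝ) : ℕ → V → ℝ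
  | 0 => x0
  | t + 1 => fun v => gam f g (det G f g x0 t v) (nbrAvg G (det G f g x0 t) v)

open ProbabilityTheory

lemma b2r_mem_Icc (b : Bool) : b2r b ∈ Set.Icc (0 : ℝ) 1 := by
  cases b <;> simp [b2r]

section Occupancy

variable {V : Type} [Fintype V] (G : SimpleGraph V) [DecidableRel G.Adj] {f g : ℝ → ℝ} {M : ℝ}

/-- At an isolated vertex the average is `0 / 0 = 0`, still in `[0, 1]`. -/
lemma nbrAvg_mem_Icc {y : V → ℝ} (hy : ∀ w, y w ∈ Set.Icc (0 : ℝ) 1) (v : V) :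
    nbrAvg G y v ∈ Set.Icc (0 : ℝ) 1 := by
  have hsum : ∑ w ∈ G.neighborFinset v, y w ≤ G.degree v := by
    simpa [SimpleGraph.card_neighborFinset_eq_degree] using
      Finset.sum_le_card_nsmul (G.neighborFinset v) y 1 fun w _ => (hy w).2
  exact ⟨div_nonneg (Finset.sum_nonneg fun w _ => (hy w).1) (Nat.cast_nonneg _),
    div_le_one_of_le₀ hsum (Nat.cast_nonneg _)⟩

lemma gam_mem_Icc (hf : ∀ a ∈ Set.Icc (0 : ℝ) 1, f a ∈ Set.Icc (0 : ℝ) 1)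
    (hg : ∀ a ∈ Set.Icc (0 : ℝ) 1, g a ∈ Set.Icc (0 : ℝ) 1)
    {a b : ℝ} (ha : a ∈ Set.Icc (0 : ℝ) 1) (hb : b ∈ Set.Icc (0 : ℝ) 1) :
    gam f g a b ∈ Set.Icc (0 : ℝ) 1 := by
  obtain ⟨hf0, hf1⟩ := hf b hb
  obtain ⟨hg0, hg1⟩ := hg b hb
  obtain ⟨ha0, ha1⟩ := ha
  constructor <;> unfold gam <;> nlinarith

lemma det_mem_Icc (hf : ∀ a ∈ Set.Icc (0 : ℝ) 1, f a ∈ Set.Icc (0 : ℝ) 1)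
    (hg : ∀ a ∈ Set.Icc (0 : ℝ) 1, g a ∈ Set.Icc (0 : ℝ) 1)
    {x0 : V → ℝ} (hx0 : ∀ v, x0 v ∈ Set.Icc (0 : ℝ) 1) (t : ℕ) (v : V) :
    det G f g x0 t v ∈ Set.Icc (0 : ℝ) 1 := by
  induction t generalizing v with
  | zero => exact hx0 v
  | succ t ih => exact gam_mem_Icc hf hg (ih v) (nbrAvg_mem_Icc G ih v)

/-- The error `a (f d - f b) + (1 - a) (g b - g d)` of the expansion is a convex combination of
Lipschitz increments. -/
lemma abs_gam_sub_gam_sub_le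
    (hfLip : ∀ a ∈ Set.Icc (0 : ℝ) 1, ∀ b ∈ Set.Icc (0 : ℝ) 1, |f a - f b| ≤ M * |a - b|)
    (hgLip : ∀ a ∈ Set.Icc (0 : ℝ) 1, ∀ b ∈ Set.Icc (0 : ℝ) 1, |g a - g b| ≤ M * |a - b|)
    {a b d : ℝ} (c : ℝ) (ha : a ∈ Set.Icc (0 : ℝ) 1) (hb : b ∈ Set.Icc (0 : ℝ) 1)
    (hd : d ∈ Set.Icc (0 : ℝ) 1) :
    |gam f g a b - gam f g c d - (1 - f d - g d) * (a - c)| ≤ M * |b - d| := by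
  obtain ⟨ha0, ha1⟩ := ha
  have hf' := hfLip d hd b hb
  have hg' := hgLip b hb d hd
  rw [abs_sub_comm d b] at hf'
  calc |gam f g a b - gam f g c d - (1 - f d - g d) * (a - c)|
      = |a * (f d - f b) + (1 - a) * (g b - g d)| := by unfold gam; ring_nf
    _ ≤ a * |f d - f b| + (1 - a) * |g b - g d| := by
      refine (abs_add_le _ _).trans_eq ?_
      rw [abs_mul, abs_mul, abs_of_nonneg ha0, abs_of_nonneg (sub_nonneg.2 ha1)]
    _ ≤ a * (M * |b - d|) + (1 - a) * (M * |b - d|) := by gcongr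
    _ = M * |b - d| := by ring

lemma abs_sum_mul_gam_sub_le
    (hfLip : ∀ a ∈ Set.Icc (0 : ℝ) 1, ∀ b ∈ Set.Icc (0 : ℝ) 1, |f a - f b| ≤ M * |a - b|)
    (hgLip : ∀ a ∈ Set.Icc (0 : ℝ) 1, ∀ b ∈ Set.Icc (0 : ℝ) 1, |g a - g b| ≤ M * |a - b|)
    (P : V → ℝ) {a b d : V → ℝ} (c : V → ℝ) (ha : ∀ v, a v ∈ Set.Icc (0 : ℝ) 1)
    (hb : ∀ v, b v ∈ Set.Icc (0 : ℝ) 1) (hd : ∀ v, d v ∈ Set.Icc (0 : ℝ) 1) :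
    |∑ v, P v * gam f g (a v) (b v) - ∑ v, P v * gam f g (c v) (d v)|
      ≤ |∑ v, P v * (1 - f (d v) - g (d v)) * a v - ∑ v, P v * (1 - f (d v) - g (d v)) * c v|
        + M * ∑ v, |P v| * |b v - d v| := by
  set e : V → ℝ := fun v =>
    gam f g (a v) (b v) - gam f g (c v) (d v) - (1 - f (d v) - g (d v)) * (a v - c v) with he
  have hsplit : ∑ v, P v * gam f g (a v) (b v) - ∑ v, P v * gam f g (c v) (d v)
      = (∑ v, P v * (1 - f (d v) - g (d v)) * a v - ∑ v, P v * (1 - f (d v) - g (d v)) * c v)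
        + ∑ v, P v * e v := by
    simp only [he, ← Finset.sum_sub_distrib, ← Finset.sum_add_distrib]
    exact Finset.sum_congr rfl fun v _ => by ring
  rw [hsplit, Finset.mul_sum]
  refine (abs_add_le _ _).trans (add_le_add_right ((Finset.abs_sum_le_sum_abs _ _).trans
    (Finset.sum_le_sum fun v _ => ?_)) _)
  rw [abs_mul, mul_left_comm]
  exact mul_le_mul_of_nonneg_left
    (abs_gam_sub_gam_sub_le hfLip hgLip (c v) (ha v) (hb v) (hd v)) (abs_nonneg _)

end Occupancy

section IndependentSums

variable {ι β : Type*} [Fintype ι] [DecidableEq ι] [Fintype β]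

lemma sum_prod_mul_mul_eq (F a : ι → β → ℝ) (hF : ∀ i, ∑ b, F i b = 1)
    (ha : ∀ i, ∑ b, F i b * a i b = 0) (i j : ι) :
    ∑ y : ι → β, (∏ k, F k (y k)) * (a i (y i) * a j (y j))
      = if i = j then ∑ b, F i b * a i b ^ 2 else 0 := by
  set H : ι → β → ℝ := fun k b =>
    F k b * ((if k = i then a i b else 1) * (if k = j then a j b else 1)) with hH
  have hprod : ∀ y : ι → β, (∏ k, F k (y k)) * (a i (y i) * a j (y j)) = ∏ k, H k (y k) := by
    intro y
    simp only [hH, Finset.prod_mul_distrib, Finset.prod_ite_eq', Finset.mem_univ, if_true]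
  simp only [hprod, ← Fintype.prod_sum]
  split_ifs with hij
  · subst hij
    rw [Finset.prod_eq_single i (fun k _ hk => by simp [hH, hk, hF]) (by simp)]
    simp [hH, sq]
  · exact Finset.prod_eq_zero (Finset.mem_univ i) (by simp [hH, hij, ha])

/-- The second moment of a sum of independent centred variables is the sum of their second
moments: `F i` is the law of the `i`-th coordinate and `a i` the `i`-th summand. -/
lemma sum_prod_mul_sum_sq (F a : ι → β → ℝ) (hF : ∀ i, ∑ b, F i b = 1)
    (ha : ∀ i, ∑ b, F i b * a i b = 0) :
    ∑ y : ι → β, (∏ k, F k (y k)) * (∑ i, a i (y i)) ^ 2 = ∑ i, ∑ b, F i b * a i b ^ 2 := by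
  simp_rw [sq (∑ i, _), Finset.sum_mul_sum, Finset.mul_sum]
  rw [Finset.sum_comm]
  refine Finset.sum_congr rfl fun i _ => ?_
  rw [Finset.sum_comm]
  simp [sum_prod_mul_mul_eq F a hF ha]

end IndependentSums

lemma sum_mul_abs_le_sqrt_sum_mul_sq {α : Type*} (s : Finset α) {w : α → ℝ} (Z : α → ℝ)
    (hw : ∀ y ∈ s, 0 ≤ w y) (hw1 : ∑ y ∈ s, w y = 1) :
    ∑ y ∈ s, w y * |Z y| ≤ √(∑ y ∈ s, w y * Z y ^ 2) := by
  refine Real.le_sqrt_of_sq_le ?_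
  simpa [sq_abs] using (convexOn_pow 2).map_sum_le hw hw1 (p := fun y => |Z y|)
    fun y _ => abs_nonneg (Z y)

section Bernoulli

variable {V : Type} [Fintype V]

def bernoulliWeight (p : V → ℝ) (y : V → Bool) : ℝ :=
  ∏ v, if y v then p v else 1 - p v

lemma bernoulliWeight_nonneg {p : V → ℝ} (hp : ∀ v, p v ∈ Set.Icc (0 : ℝ) 1) (y : V → Bool) :
    0 ≤ bernoulliWeight p y :=
  Finset.prod_nonneg fun v _ => by
    obtain ⟨h0, h1⟩ := hp v
    split <;> linarith

variable [DecidableEq V]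

lemma sum_bernoulliWeight (p : V → ℝ) : ∑ y, bernoulliWeight p y = 1 := by
  unfold bernoulliWeight
  exact (Fintype.prod_sum fun v (b : Bool) => if b then p v else 1 - p v).symm.trans (by simp)

lemma sum_bernoulliWeight_mul_sq (p P : V → ℝ) :
    ∑ y, bernoulliWeight p y * (∑ v, P v * (b2r (y v) - p v)) ^ 2
      = ∑ v, P v ^ 2 * (p v * (1 - p v)) := by
  unfold bernoulliWeight
  rw [sum_prod_mul_sum_sq (fun v b => if b then p v else 1 - p v)
    (fun v b => P v * (b2r b - p v)) (fun v => by simp) (fun v => by simp only [Fintype.sum_bool, b2r, ↓reduceIte, Bool.false_eq_true]; ring)]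
  refine Finset.sum_congr rfl fun v _ => ?_
  simp only [Fintype.sum_bool, b2r, ↓reduceIte, Bool.false_eq_true]
  ring

lemma sum_bernoulliWeight_mul_abs_le {p : V → ℝ} (hp : ∀ v, p v ∈ Set.Icc (0 : ℝ) 1)
    (P : V → ℝ) (c : ℝ) :
    ∑ y, bernoulliWeight p y * |∑ v, P v * b2r (y v) - c|
      ≤ √(∑ v, P v ^ 2) + |∑ v, P v * p v - c| := by
  have hw := bernoulliWeight_nonneg hp
  have hsplit : ∀ y : V → Bool, ∑ v, P v * b2r (y v) - c
      = ∑ v, P v * (b2r (y v) - p v) + (∑ v, P v * p v - c) := by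
    intro y
    simp only [mul_sub, Finset.sum_sub_distrib]
    ring
  have hfluct : ∑ y, bernoulliWeight p y * |∑ v, P v * (b2r (y v) - p v)| ≤ √(∑ v, P v ^ 2) := by
    refine (sum_mul_abs_le_sqrt_sum_mul_sq _ _ (fun y _ => hw y) (sum_bernoulliWeight p)).trans ?_
    rw [sum_bernoulliWeight_mul_sq]
    refine Real.sqrt_le_sqrt (Finset.sum_le_sum fun v _ => ?_)
    obtain ⟨h0, h1⟩ := hp v
    exact mul_le_of_le_one_right (sq_nonneg _) (by nlinarith)
  calc ∑ y, bernoulliWeight p y * |∑ v, P v * b2r (y v) - c|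
      ≤ ∑ y, bernoulliWeight p y
          * (|∑ v, P v * (b2r (y v) - p v)| + |∑ v, P v * p v - c|) := by
        gcongr with y
        · exact hw y
        · rw [hsplit]; exact abs_add_le _ _
    _ = ∑ y, bernoulliWeight p y * |∑ v, P v * (b2r (y v) - p v)|
          + |∑ v, P v * p v - c| := by
        simp [mul_add, Finset.sum_add_distrib, ← Finset.sum_mul, sum_bernoulliWeight]
    _ ≤ √(∑ v, P v ^ 2) + |∑ v, P v * p v - c| := by gcongr

end Bernoulli

lemma integral_sum_smul_dirac {α : Type*} [Fintype α] [MeasurableSpace α]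
    [MeasurableSingletonClass α] {c : α → ℝ} (hc : ∀ a, 0 ≤ c a) (h : α → ℝ) :
    ∫ y, h y ∂(∑ a, ENNReal.ofReal (c a) • Measure.dirac a) = ∑ a, c a * h a := by
  rw [integral_finsetSum_measure fun a _ =>
    (Integrable.of_finite (μ := Measure.dirac a)).smul_measure ENNReal.ofReal_ne_top]
  refine Finset.sum_congr rfl fun a _ => ?_
  rw [integral_smul_measure, integral_dirac, smul_eq_mul, ENNReal.toReal_ofReal (hc a)]

lemma integral_bind_of_finite {α β : Type*} [MeasurableSpace α] [MeasurableSpace β]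
    [Countable α] [MeasurableSingletonClass α] [Finite β] [MeasurableSingletonClass β]
    (μ : Measure α) [IsFiniteMeasure μ] {κ : α → Measure β} (hκ : ∀ a, IsProbabilityMeasure (κ a))
    (h : β → ℝ) :
    ∫ y, h y ∂μ.bind κ = ∫ x, ∫ y, h y ∂κ x ∂μ := by
  let K : Kernel α β := Kernel.ofFunOfCountable κ
  have : IsMarkovKernel K := ⟨hκ⟩
  have hK : μ.bind κ = (K ∘ₖ Kernel.const Unit μ) () := rfl
  rw [hK, Kernel.integral_comp Integrable.of_finite]
  rfl

section Transition

variable {V : Type} [Fintype V] (G : SimpleGraph V) [DecidableRel G.Adj] {f g : ℝ → ℝ} {M : ℝ}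

def stepProb (f g : ℝ → ℝ) (X : V → Bool) (v : V) : ℝ :=
  gam f g (b2r (X v)) (nbrAvg G (fun w => b2r (X w)) v)

lemma stepProb_mem_Icc (hf : ∀ a ∈ Set.Icc (0 : ℝ) 1, f a ∈ Set.Icc (0 : ℝ) 1)
    (hg : ∀ a ∈ Set.Icc (0 : ℝ) 1, g a ∈ Set.Icc (0 : ℝ) 1) (X : V → Bool) (v : V) :
    stepProb G f g X v ∈ Set.Icc (0 : ℝ) 1 :=
  gam_mem_Icc hf hg (b2r_mem_Icc _) (nbrAvg_mem_Icc G (fun _ => b2r_mem_Icc _) v)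

variable [DecidableEq V]

lemma stepMeasure_eq (X : V → Bool) :
    stepMeasure G f g X
      = ∑ y, ENNReal.ofReal (bernoulliWeight (stepProb G f g X) y) • Measure.dirac y :=
  rfl

lemma integral_stepMeasure (hf : ∀ a ∈ Set.Icc (0 : ℝ) 1, f a ∈ Set.Icc (0 : ℝ) 1)
    (hg : ∀ a ∈ Set.Icc (0 : ℝ) 1, g a ∈ Set.Icc (0 : ℝ) 1) (X : V → Bool)
    (h : (V → Bool) → ℝ) :
    ∫ y, h y ∂stepMeasure G f g X = ∑ y, bernoulliWeight (stepProb G f g X) y * h y := by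
  rw [stepMeasure_eq]
  exact integral_sum_smul_dirac (bernoulliWeight_nonneg (stepProb_mem_Icc G hf hg X)) h

lemma isProbabilityMeasure_stepMeasure (hf : ∀ a ∈ Set.Icc (0 : ℝ) 1, f a ∈ Set.Icc (0 : ℝ) 1)
    (hg : ∀ a ∈ Set.Icc (0 : ℝ) 1, g a ∈ Set.Icc (0 : ℝ) 1) (X : V → Bool) :
    IsProbabilityMeasure (stepMeasure G f g X) := by
  constructor
  rw [stepMeasure_eq, Measure.finsetSum_apply]
  simp only [Measure.smul_apply, measure_univ, smul_eq_mul, mul_one]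
  rw [← ENNReal.ofReal_sum_of_nonneg fun y _ =>
    bernoulliWeight_nonneg (stepProb_mem_Icc G hf hg X) y, sum_bernoulliWeight, ENNReal.ofReal_one]

lemma isProbabilityMeasure_law (hf : ∀ a ∈ Set.Icc (0 : ℝ) 1, f a ∈ Set.Icc (0 : ℝ) 1)
    (hg : ∀ a ∈ Set.Icc (0 : ℝ) 1, g a ∈ Set.Icc (0 : ℝ) 1) (x0 : V → Bool) (t : ℕ) :
    IsProbabilityMeasure (law G f g x0 t) := by
  induction t with
  | zero => exact Measure.dirac.isProbabilityMeasure
  | succ t ih =>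
    exact isProbabilityMeasure_bind Measurable.of_discrete.aemeasurable
      (ae_of_all _ (isProbabilityMeasure_stepMeasure G hf hg))

lemma integral_law_succ (hf : ∀ a ∈ Set.Icc (0 : ℝ) 1, f a ∈ Set.Icc (0 : ℝ) 1)
    (hg : ∀ a ∈ Set.Icc (0 : ℝ) 1, g a ∈ Set.Icc (0 : ℝ) 1) (x0 : V → Bool) (t : ℕ)
    (h : (V → Bool) → ℝ) :
    ∫ y, h y ∂law G f g x0 (t + 1) = ∫ X, ∫ y, h y ∂stepMeasure G f g X ∂law G f g x0 t :=
  have := isProbabilityMeasure_law G hf hg x0 t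
  integral_bind_of_finite _ (isProbabilityMeasure_stepMeasure G hf hg) h

lemma integral_stepMeasure_abs_sub_le
    (hf : ∀ a ∈ Set.Icc (0 : ℝ) 1, f a ∈ Set.Icc (0 : ℝ) 1)
    (hg : ∀ a ∈ Set.Icc (0 : ℝ) 1, g a ∈ Set.Icc (0 : ℝ) 1)
    (hfLip : ∀ a ∈ Set.Icc (0 : ℝ) 1, ∀ b ∈ Set.Icc (0 : ℝ) 1, |f a - f b| ≤ M * |a - b|)
    (hgLip : ∀ a ∈ Set.Icc (0 : ℝ) 1, ∀ b ∈ Set.Icc (0 : ℝ) 1, |g a - g b| ≤ M * |a - b|)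
    (P : V → ℝ) {x : V → ℝ} (hx : ∀ v, x v ∈ Set.Icc (0 : ℝ) 1) (X : V → Bool) :
    ∫ y, |∑ v, P v * b2r (y v) - ∑ v, P v * gam f g (x v) (nbrAvg G x v)| ∂stepMeasure G f g X
      ≤ √(∑ v, P v ^ 2)
        + |∑ v, P v * (1 - f (nbrAvg G x v) - g (nbrAvg G x v)) * b2r (X v)
            - ∑ v, P v * (1 - f (nbrAvg G x v) - g (nbrAvg G x v)) * x v|
        + M * ∑ v, |P v| * |nbrAvg G (fun w => b2r (X w)) v - nbrAvg G x v| := by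
  rw [integral_stepMeasure G hf hg, add_assoc]
  refine (sum_bernoulliWeight_mul_abs_le (stepProb_mem_Icc G hf hg X) P _).trans ?_
  gcongr
  exact abs_sum_mul_gam_sub_le hfLip hgLip P x (fun _ => b2r_mem_Icc _)
    (fun v => nbrAvg_mem_Icc G (fun _ => b2r_mem_Icc _) v) (fun v => nbrAvg_mem_Icc G hx v)

end Transition

theorem linear_functional_one_step_bound_general
    {V : Type} [Fintype V] [DecidableEq V]
    (G : SimpleGraph V) [DecidableRel G.Adj]
    (f g : ℝ → ℝ) (M : ℝ)
    (hf01 : ∀ a ∈ Set.Icc (0:ℝ) 1, f a ∈ Set.Icc (0:ℝ) 1)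
    (hg01 : ∀ a ∈ Set.Icc (0:ℝ) 1, g a ∈ Set.Icc (0:ℝ) 1)
    (hfLip : ∀ a ∈ Set.Icc (0:ℝ) 1, ∀ b ∈ Set.Icc (0:ℝ) 1, |f a - f b| ≤ M * |a - b|)
    (hgLip : ∀ a ∈ Set.Icc (0:ℝ) 1, ∀ b ∈ Set.Icc (0:ℝ) 1, |g a - g b| ≤ M * |a - b|)
    (x0 : V → Bool) (P : V → ℝ) (t : ℕ) :
    -- coefficients of the linear functional `P^{x(t)}`
    (fun Px : V → ℝ =>
      ∫ y, |∑ v, P v * b2r (y v) - ∑ v, P v * det G f g (fun w => b2r (x0 w)) (t + 1) v|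
          ∂ (law G f g x0 (t + 1))
        ≤ Real.sqrt (∑ v, P v ^ 2)
          + (∫ y, |∑ v, Px v * b2r (y v) - ∑ v, Px v * det G f g (fun w => b2r (x0 w)) t v|
              ∂ (law G f g x0 t))
          + M * ∑ v, |P v| *
              ∫ y, |nbrAvg G (fun w => b2r (y w)) v
                    - nbrAvg G (det G f g (fun w => b2r (x0 w)) t) v| ∂ (law G f g x0 t))
      (fun v => P v * (1 - f (nbrAvg G (det G f g (fun w => b2r (x0 w)) t) v)
                         - g (nbrAvg G (det G f g (fun w => b2r (x0 w)) t) v))) := by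
  have hx := det_mem_Icc G hf01 hg01 (fun v => b2r_mem_Icc (x0 v)) t
  have := isProbabilityMeasure_law G hf01 hg01 x0 t
  rw [integral_law_succ G hf01 hg01]
  refine (integral_mono Integrable.of_finite Integrable.of_finite fun X =>
    integral_stepMeasure_abs_sub_le G hf01 hg01 hfLip hgLip P hx X).trans_eq ?_
  rw [integral_add Integrable.of_finite Integrable.of_finite,
    integral_add Integrable.of_finite Integrable.of_finite, integral_const, integral_const_mul,
    integral_finsetSum _ fun v _ => Integrable.of_finite]
  simp [integral_const_mul]

/-- **Lemma 2.1**: one-step bound for a linear functional `P(y) = ∑_v P_v y_v`. -/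
theorem linear_functional_one_step_bound
    {V : Type} [Fintype V] [DecidableEq V]
    (G : SimpleGraph V) [DecidableRel G.Adj]
    (hdeg : ∀ v : V, 0 < G.degree v)
    (f g : ℝ → ℝ) (M : ℝ)
    (hf01 : ∀ a ∈ Set.Icc (0:ℝ) 1, f a ∈ Set.Icc (0:ℝ) 1)
    (hg01 : ∀ a ∈ Set.Icc (0:ℝ) 1, g a ∈ Set.Icc (0:ℝ) 1)
    (hfLip : ∀ a ∈ Set.Icc (0:ℝ) 1, ∀ b ∈ Set.Icc (0:ℝ) 1, |f a - f b| ≤ M * |a - b|)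
    (hgLip : ∀ a ∈ Set.Icc (0:ℝ) 1, ∀ b ∈ Set.Icc (0:ℝ) 1, |g a - g b| ≤ M * |a - b|)
    (x0 : V → Bool) (P : V → ℝ) (t : ℕ) :
    -- coefficients of the linear functional `P^{x(t)}`
    (fun Px : V → ℝ =>
      ∫ y, |∑ v, P v * b2r (y v) - ∑ v, P v * det G f g (fun w => b2r (x0 w)) (t + 1) v|
          ∂ (law G f g x0 (t + 1))
        ≤ Real.sqrt (∑ v, P v ^ 2)
          + (∫ y, |∑ v, Px v * b2r (y v) - ∑ v, Px v * det G f g (fun w => b2r (x0 w)) t v|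
              ∂ (law G f g x0 t))
          + M * ∑ v, |P v| *
              ∫ y, |nbrAvg G (fun w => b2r (y w)) v
                    - nbrAvg G (det G f g (fun w => b2r (x0 w)) t) v| ∂ (law G f g x0 t))
      (fun v => P v * (1 - f (nbrAvg G (det G f g (fun w => b2r (x0 w)) t) v)
                         - g (nbrAvg G (det G f g (fun w => b2r (x0 w)) t) v))) :=
  linear_functional_one_step_bound_general G f g M hf01 hg01 hfLip hgLip x0 P t
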